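/- arXiv:1201.0653 — 2 statements merged into one kernel-verified Lean document; each statement's English description precedes it below -/
import Mathlib

section
/- Let X be a complex space, K ⊂ X compact, ρ a plurisubharmonic function on X, and suppose x ∈ X has the property that for every ε > 0 and every open set U ⊃ K there exists an analytic disc f : closed unit disc → X, holomorphic on the open disc, with f(0) = x, image contained in a fixed relatively compact set V, and f(e^{it}) ∈ U for all t outside a set E_f ⊂ [0,2π] of Lebesgue measure < ε. Then ρ(x) ≤ sup_K ρ. -/
open MeasureTheory Metric Complex Set

/-! Given `m > sup_K ρ`, upper semicontinuity makes `U = {ρ < m}` an open neighbourhood of `K`.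
For a disc `f` through `x` whose boundary circle stays in `U` off a set of measure `< ε`, the
boundary values of `ρ ∘ f` are `≤ m` off that set and bounded by `C = sup_V ρ ⊔ m` on it, so the
sub-mean-value inequality gives `ρ x ≤ m + (C - m) ε / 2π`. Letting `ε → 0` and then `m ↓ sup_K ρ`
proves the claim. -/

theorem le_of_forall_pos_le_add_mul {a b k : ℝ} (h : ∀ ε > 0, a ≤ b + k * ε) : a ≤ b := by
  have hlim : Filter.Tendsto (fun ε => b + k * ε) (nhdsWithin 0 (Ioi 0)) (nhds b) :=
    ((by fun_prop : Continuous fun ε : ℝ => b + k * ε).tendsto' 0 b (by simp)).mono_left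
      nhdsWithin_le_nhds
  exact ge_of_tendsto hlim (eventually_nhdsWithin_of_forall h)

theorem intervalIntegral_le_of_le_off_of_volume_le {g : ℝ → ℝ} {a b m C ε : ℝ} {E : Set ℝ}
    (hab : a ≤ b) (hg : IntervalIntegrable g volume a b) (hE : MeasurableSet E)
    (hEε : volume E ≤ ENNReal.ofReal ε) (hε : 0 ≤ ε) (hmC : m ≤ C)
    (hC : ∀ t ∈ Icc a b, g t ≤ C) (hm : ∀ t ∈ Icc a b \ E, g t ≤ m) :
    ∫ t in a..b, g t ≤ m * (b - a) + (C - m) * ε := by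
  set χ : ℝ → ℝ := E.indicator fun _ => 1
  have hχ : IntervalIntegrable χ volume a b :=
    ((integrable_indicator_iff hE).2 (integrableOn_const
      (ne_top_of_le_ne_top ENNReal.ofReal_ne_top hEε))).intervalIntegrable
  have hχε : ∫ t in a..b, χ t ≤ ε := by
    rw [intervalIntegral.integral_of_le hab, setIntegral_indicator hE, setIntegral_const,
      smul_eq_mul, mul_one]
    exact ENNReal.toReal_le_of_le_ofReal hε ((measure_mono inter_subset_right).trans hEε)
  have hmajorant : ∀ t ∈ Icc a b, g t ≤ m + (C - m) * χ t := by
    intro t ht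
    by_cases htE : t ∈ E
    · simpa [χ, indicator_of_mem htE] using hC t ht
    · simpa [χ, indicator_of_notMem htE] using hm t ⟨ht, htE⟩
  calc ∫ t in a..b, g t ≤ ∫ t in a..b, (m + (C - m) * χ t) :=
        intervalIntegral.integral_mono_on hab hg (intervalIntegrable_const.add
          (hχ.const_mul _)) hmajorant
    _ = m * (b - a) + (C - m) * ∫ t in a..b, χ t := by
        rw [intervalIntegral.integral_add intervalIntegrable_const (hχ.const_mul _),
          intervalIntegral.integral_const, intervalIntegral.integral_const_mul, smul_eq_mul,
          mul_comm]
    _ ≤ m * (b - a) + (C - m) * ε := by gcongr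

theorem stmt1_general {X : Type*} [MetricSpace X]
    (𝒜 : Set (ℂ → X))
    (K V : Set X) (hK : IsCompact K)
    (ρ : X → ℝ) (husc : UpperSemicontinuous ρ) (hbdd : BddAbove (ρ '' V))
    (hsub : ∀ f ∈ 𝒜,
      IntervalIntegrable (fun t : ℝ => ρ (f (Complex.exp (t * Complex.I)))) volume 0 (2 * Real.pi) ∧
      ρ (f 0) ≤ (2 * Real.pi)⁻¹ *
        ∫ t in (0:ℝ)..(2 * Real.pi), ρ (f (Complex.exp (t * Complex.I))))
    (x : X)
    (hx : ∀ ε > (0:ℝ), ∀ U : Set X, IsOpen U → K ⊆ U →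
      ∃ f ∈ 𝒜, f 0 = x ∧ (∀ ζ ∈ closedBall (0:ℂ) 1, f ζ ∈ V) ∧
        ∃ E ⊆ Icc (0:ℝ) (2 * Real.pi), MeasurableSet E ∧ volume E < ENNReal.ofReal ε ∧
          ∀ t ∈ Icc (0:ℝ) (2 * Real.pi) \ E, f (Complex.exp (t * Complex.I)) ∈ U) :
    ρ x ≤ sSup (ρ '' K) := by
  obtain ⟨B, hB⟩ := hbdd
  have hKbdd : BddAbove (ρ '' K) := (husc.upperSemicontinuousOn K).bddAbove_of_isCompact hK
  refine le_of_forall_gt_imp_ge_of_dense fun m hm => ?_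
  have hKU : K ⊆ ρ ⁻¹' Iio m := fun y hy => (le_csSup hKbdd (mem_image_of_mem ρ hy)).trans_lt hm
  refine le_of_forall_pos_le_add_mul (k := (max B m - m) / (2 * Real.pi)) fun ε hε => ?_
  obtain ⟨f, hf𝒜, rfl, hfV, E, -, hE, hEε, hfU⟩ := hx ε hε _ (husc.isOpen_preimage m) hKU
  obtain ⟨hint, hmean⟩ := hsub f hf𝒜
  have hboundary : ∀ t : ℝ, ρ (f (exp (t * I))) ≤ max B m := fun t =>
    (hB (mem_image_of_mem ρ (hfV _ (by simp [norm_exp_ofReal_mul_I])))).trans (le_max_left _ _)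
  have hint_le := intervalIntegral_le_of_le_off_of_volume_le Real.two_pi_pos.le hint hE hEε.le
    hε.le (le_max_right B m) (fun t _ => hboundary t) (fun t ht => (hfU t ht).le)
  calc ρ (f 0) ≤ (2 * Real.pi)⁻¹ * ∫ t in (0:ℝ)..(2 * Real.pi), ρ (f (exp (t * I))) := hmean
    _ ≤ (2 * Real.pi)⁻¹ * (m * (2 * Real.pi - 0) + (max B m - m) * ε) := by gcongr
    _ = m + (max B m - m) / (2 * Real.pi) * ε := by field_simp; ring

/-- Let `X` be a complex space (with `𝒜` its family of analytic discs,
i.e. continuous maps of the closed unit disc into `X`, holomorphic in the interior),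
`K ⊆ X` compact, and `ρ` a plurisubharmonic function on `X` (upper semicontinuous and
satisfying the sub-mean-value inequality over every analytic disc).  If `x ∈ X` has the
property that for every `ε > 0` and every open `U ⊇ K` there is an analytic disc `f`
with `f 0 = x`, image in a fixed relatively compact set `V`, and `f (e^{it}) ∈ U` for
all `t` outside a set `E ⊆ [0,2π]` of measure `< ε`, then `ρ x ≤ sup_K ρ`. -/
theorem stmt1 {X : Type*} [MetricSpace X]
    (𝒜 : Set (ℂ → X)) (hdisc : ∀ f ∈ 𝒜, ContinuousOn f (closedBall (0:ℂ) 1))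
    (K V : Set X) (hK : IsCompact K) (hKne : K.Nonempty)
    (hV : IsCompact (closure V))
    (ρ : X → ℝ) (husc : UpperSemicontinuous ρ) (hbdd : BddAbove (ρ '' V))
    (hsub : ∀ f ∈ 𝒜,
      IntervalIntegrable (fun t : ℝ => ρ (f (Complex.exp (t * Complex.I)))) volume 0 (2 * Real.pi) ∧
      ρ (f 0) ≤ (2 * Real.pi)⁻¹ *
        ∫ t in (0:ℝ)..(2 * Real.pi), ρ (f (Complex.exp (t * Complex.I))))
    (x : X)
    (hx : ∀ ε > (0:ℝ), ∀ U : Set X, IsOpen U → K ⊆ U →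
      ∃ f ∈ 𝒜, f 0 = x ∧ (∀ ζ ∈ closedBall (0:ℂ) 1, f ζ ∈ V) ∧
        ∃ E ⊆ Icc (0:ℝ) (2 * Real.pi), MeasurableSet E ∧ volume E < ENNReal.ofReal ε ∧
          ∀ t ∈ Icc (0:ℝ) (2 * Real.pi) \ E, f (Complex.exp (t * Complex.I)) ∈ U) :
    ρ x ≤ sSup (ρ '' K) :=
  stmt1_general 𝒜 K V hK ρ husc hbdd hsub x hx
end

section
/- Let f : closed unit disc → ℂ be continuous, holomorphic on the open disc, with finitely many zeros ζ_1,…,ζ_N (with multiplicities m_k) in the open disc, none at 0, and |f| ≤ M on the unit circle. Then |f(0)| ≤ M · Π_k |ζ_k|^{m_k}. -/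
/-!
Rather than dividing `f` by the Blaschke product, multiply `g` by the reflected polynomial
`∏ₖ (1 - conj ζₖ w) ^ mₖ`, which on the unit circle has the same modulus as `∏ₖ (w - ζₖ) ^ mₖ`
(there `1 - conj a w = conj (w - a) w`). The product is holomorphic with modulus `|f| ≤ M` on the
circle, so by the maximum principle its value `g 0` at the centre has modulus at most `M`, while
`f 0 = ∏ₖ (-ζₖ) ^ mₖ g 0`.
-/

open Metric Complex ComplexConjugate

theorem norm_le_of_forall_mem_sphere_norm_le {E F : Type*} [NormedAddCommGroup E]
    [NormedSpace ℂ E] [Nontrivial E] [NormedAddCommGroup F] [NormedSpace ℂ F]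
    {f : E → F} {c : E} {r C : ℝ} (hd : DiffContOnCl ℂ f (ball c r))
    (hC : ∀ z ∈ sphere c r, ‖f z‖ ≤ C) {z : E} (hz : z ∈ ball c r) : ‖f z‖ ≤ C :=
  norm_le_of_forall_mem_frontier_norm_le isBounded_ball hd
    (fun w hw => hC w (frontier_ball_subset_sphere hw)) (subset_closure hz)

theorem norm_one_sub_conj_mul_eq_norm_sub {z : ℂ} (hz : ‖z‖ = 1) (a : ℂ) :
    ‖1 - conj a * z‖ = ‖z - a‖ := by
  have hzz : conj z * z = 1 := by
    rw [← normSq_eq_conj_mul_self, normSq_eq_norm_sq, hz]; norm_num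
  calc ‖1 - conj a * z‖ = ‖conj (z - a) * z‖ := by rw [← hzz, map_sub, sub_mul]
    _ = ‖z - a‖ := by rw [norm_mul, RCLike.norm_conj, hz, mul_one]

theorem norm_prod_one_sub_conj_mul_pow_eq {ι : Type*} (s : Finset ι) (a : ι → ℂ) (m : ι → ℕ)
    {z : ℂ} (hz : ‖z‖ = 1) :
    ‖∏ k ∈ s, (1 - conj (a k) * z) ^ m k‖ = ‖∏ k ∈ s, (z - a k) ^ m k‖ := by
  simp only [norm_prod, norm_pow, norm_one_sub_conj_mul_eq_norm_sub hz]

theorem stmt6_general (N : ℕ) (ζ : Fin N → ℂ) (m : Fin N → ℕ) (f g : ℂ → ℂ)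
    (hgc : ContinuousOn g (closedBall (0:ℂ) 1)) (hgd : DifferentiableOn ℂ g (ball (0:ℂ) 1))
    (hfact : ∀ w ∈ closedBall (0:ℂ) 1, f w = (∏ k, (w - ζ k) ^ (m k)) * g w)
    (M : ℝ) (hM : ∀ w : ℂ, ‖w‖ = 1 → ‖f w‖ ≤ M) :
    ‖f 0‖ ≤ M * ∏ k, ‖ζ k‖ ^ (m k) := by
  set B : ℂ → ℂ := fun w => ∏ k, (1 - conj (ζ k) * w) ^ m k
  have hB : Differentiable ℂ B := by fun_prop
  have hBg : DiffContOnCl ℂ (fun w => B w * g w) (ball 0 1) :=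
    DiffContOnCl.mk_ball (hB.differentiableOn.mul hgd) (hB.continuous.continuousOn.mul hgc)
  have hBg_sphere : ∀ z ∈ sphere (0:ℂ) 1, ‖B z * g z‖ ≤ M := fun z hz => by
    have hz1 : ‖z‖ = 1 := by simpa using hz
    rw [norm_mul, norm_prod_one_sub_conj_mul_pow_eq _ _ _ hz1, ← norm_mul,
      ← hfact z (sphere_subset_closedBall hz)]
    exact hM z hz1
  have hg0 : ‖g 0‖ ≤ M := by
    simpa [B] using norm_le_of_forall_mem_sphere_norm_le hBg hBg_sphere (mem_ball_self one_pos)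
  calc ‖f 0‖ = (∏ k, ‖ζ k‖ ^ m k) * ‖g 0‖ := by
        rw [hfact 0 (mem_closedBall_self zero_le_one), norm_mul, norm_prod]
        simp only [zero_sub, norm_pow, norm_neg]
    _ ≤ M * ∏ k, ‖ζ k‖ ^ m k := by
        rw [mul_comm M]
        gcongr

/-- if `f` is continuous on the closed unit disc, holomorphic inside, with
zeros exactly `ζ_1,…,ζ_N` (with multiplicities `m_k`) in the open disc, none at `0`, and
`|f| ≤ M` on the unit circle, then `|f 0| ≤ M ⋅ Π_k |ζ_k|^{m_k}`. -/
theorem stmt6 (N : ℕ) (ζ : Fin N → ℂ)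
    (hζ : ∀ k, ζ k ∈ ball (0:ℂ) 1) (hζ0 : ∀ k, ζ k ≠ 0)
    (m : Fin N → ℕ) (hm : ∀ k, 0 < m k)
    (f g : ℂ → ℂ)
    (hfc : ContinuousOn f (closedBall (0:ℂ) 1)) (hfd : DifferentiableOn ℂ f (ball (0:ℂ) 1))
    (hgc : ContinuousOn g (closedBall (0:ℂ) 1)) (hgd : DifferentiableOn ℂ g (ball (0:ℂ) 1))
    (hgne : ∀ w ∈ ball (0:ℂ) 1, g w ≠ 0)
    (hfact : ∀ w ∈ closedBall (0:ℂ) 1, f w = (∏ k, (w - ζ k) ^ (m k)) * g w)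
    (M : ℝ) (hM : ∀ w : ℂ, ‖w‖ = 1 → ‖f w‖ ≤ M) :
    ‖f 0‖ ≤ M * ∏ k, ‖ζ k‖ ^ (m k) :=
  stmt6_general N ζ m f g hgc hgd hfact M hM
end
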